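/- Let H₁, H₂ be Hilbert spaces, R_ε bounded self-adjoint nonnegative compact operators on H₁ with eigenvalues ν_1^ε ≥ ν_2^ε ≥ ⋯ > 0, R a self-adjoint nonnegative compact operator on H₂ with eigenvalues ν_1 ≥ ν_2 ≥ ⋯ > 0, and U_ε : H₂ → H₁ with ‖U_ε g‖ → ‖g‖ for all g. Suppose ‖R_ε U_ε − U_ε R‖_{op} → 0 and hypothesis (H4) holds (discrete compactness of R_ε). Then for every fixed k, ν_k^ε → ν_k as ε → 0. -/

import Mathlib

/-!
Fix `k`. It suffices that every sequence `εₙ → 0⁺` has a subsequence along which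
`νε εₙ k → ν k`. Applying (H4) to the unit eigenvectors `eε εₙ j`, `j ≤ k`, and passing to a
subsequence, we may assume `Rε εₙ (eε εₙ j) - Uε εₙ g_j → 0` and `νε εₙ j → m_j`.

* `ν k ≤ m_k`: by min-max, `Uε εₙ` maps some unit vector `aₙ` of coefficients of
  `e 0, …, e k` to a vector with Rayleigh quotient for `Rε εₙ` at most `νε εₙ k`. A limit point
  `a` of the `aₙ` exists by compactness of the sphere in `ℝᵏ⁺¹`; since `Uε` is asymptotically
  isometric and almost intertwines `Rε` with `R`, the Rayleigh quotient of `R` at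
  `∑ aⱼ e j` is at most `m_k`, and it is at least `ν k`.
* `m_k ≤ ν k`: the vectors `h_j = m_j⁻¹ g_j` satisfy `Uε εₙ h_j - eε εₙ j → 0`. Hence they are
  orthonormal, and they are eigenvectors of `R` with eigenvalues `m_j ≥ m_k`; min-max for `R`
  gives `m_k ≤ ν k`.
-/

open Filter Topology
open scoped RealInnerProductSpace

section Eigenbasis

variable {H : Type*} [NormedAddCommGroup H] [InnerProductSpace ℝ H]

lemma HilbertBasis.hasSum_sq_inner {ι : Type*} (b : HilbertBasis ι ℝ H) (x : H) :
    HasSum (fun i => ⟪b i, x⟫ ^ 2) (‖x‖ ^ 2) := by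
  simpa only [real_inner_comm x, ← sq, real_inner_self_eq_norm_sq] using
    b.hasSum_inner_mul_inner x x

lemma Orthonormal.mul_norm_sq_le_inner_apply {ι : Type*} [Fintype ι] {v : ι → H}
    (hv : Orthonormal ℝ v) {T : H →L[ℝ] H} {μ : ι → ℝ} (hT : ∀ i, T (v i) = μ i • v i) {c : ℝ}
    (hc : ∀ i, c ≤ μ i) (a : ι → ℝ) :
    c * ‖∑ i, a i • v i‖ ^ 2 ≤ ⟪T (∑ i, a i • v i), ∑ i, a i • v i⟫ := by
  have hTsum : T (∑ i, a i • v i) = ∑ i, (μ i * a i) • v i := by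
    simp [map_sum, hT, smul_smul, mul_comm]
  rw [hTsum, ← real_inner_self_eq_norm_sq, hv.inner_sum, hv.inner_sum, Finset.mul_sum]
  refine Finset.sum_le_sum fun i _ => ?_
  simp only [conj_trivial]
  nlinarith [hc i, mul_self_nonneg (a i)]

lemma Orthonormal.sum_smul_ne_zero {ι : Type*} [Fintype ι] {v : ι → H} (hv : Orthonormal ℝ v)
    {a : ι → ℝ} (ha : a ≠ 0) :
    ∑ i, a i • v i ≠ 0 :=
  fun h0 => ha (funext (Fintype.linearIndependent_iff.1 hv.linearIndependent a h0))

variable [CompleteSpace H]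

lemma IsSelfAdjoint.inner_apply_of_apply_eq_smul {T : H →L[ℝ] H} (hT : IsSelfAdjoint T)
    {v : H} {μ : ℝ} (hv : T v = μ • v) (x : H) : ⟪v, T x⟫ = μ * ⟪v, x⟫ := by
  rw [← ContinuousLinearMap.coe_coe T, ← hT.isSymmetric v x, ContinuousLinearMap.coe_coe, hv,
    real_inner_smul_left]

variable {T : H →L[ℝ] H}

lemma hasSum_inner_apply_self {ι : Type*} {b : HilbertBasis ι ℝ H} {μ : ι → ℝ}
    (hT : IsSelfAdjoint T) (hb : ∀ i, T (b i) = μ i • b i) (x : H) :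
    HasSum (fun i => μ i * ⟪b i, x⟫ ^ 2) ⟪T x, x⟫ := by
  have hterm : ∀ i, ⟪T x, b i⟫ * ⟪b i, x⟫ = μ i * ⟪b i, x⟫ ^ 2 := fun i => by
    rw [real_inner_comm (b i), hT.inner_apply_of_apply_eq_smul (hb i)]
    ring
  simpa only [hterm] using b.hasSum_inner_mul_inner (T x) x

lemma opNorm_le_of_abs_le {ι : Type*} {b : HilbertBasis ι ℝ H} {μ : ι → ℝ}
    (hT : IsSelfAdjoint T) (hb : ∀ i, T (b i) = μ i • b i) {M : ℝ}
    (hM₀ : 0 ≤ M) (hM : ∀ i, |μ i| ≤ M) : ‖T‖ ≤ M := by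
  refine T.opNorm_le_bound hM₀ fun x => (pow_le_pow_iff_left₀ (norm_nonneg _) (by positivity)
    two_ne_zero).1 ?_
  have hTx : HasSum (fun i => μ i ^ 2 * ⟪b i, x⟫ ^ 2) (‖T x‖ ^ 2) := by
    simpa only [hT.inner_apply_of_apply_eq_smul (hb _), mul_pow] using b.hasSum_sq_inner (T x)
  rw [mul_pow]
  refine hasSum_le (fun i => ?_) hTx ((b.hasSum_sq_inner x).mul_left (M ^ 2))
  exact mul_le_mul_of_nonneg_right (sq_le_sq.2 ((hM i).trans_eq (abs_of_nonneg hM₀).symm))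
    (sq_nonneg _)

lemma inner_apply_self_le {b : HilbertBasis ℕ ℝ H} {μ : ℕ → ℝ} (hT : IsSelfAdjoint T)
    (hb : ∀ i, T (b i) = μ i • b i) (hμ : Antitone μ) {k : ℕ} {x : H}
    (hx : ∀ i < k, ⟪b i, x⟫ = 0) : ⟪T x, x⟫ ≤ μ k * ‖x‖ ^ 2 := by
  refine hasSum_le (fun i => ?_) (hasSum_inner_apply_self hT hb x)
    ((b.hasSum_sq_inner x).mul_left (μ k))
  rcases lt_or_ge i k with hik | hik
  · simp [hx i hik]
  · exact mul_le_mul_of_nonneg_right (hμ hik) (sq_nonneg _)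

/-- The Courant–Fischer min-max inequality. -/
theorem exists_norm_eq_one_inner_apply_le {V : Type*} [NormedAddCommGroup V] [NormedSpace ℝ V]
    [FiniteDimensional ℝ V] {b : HilbertBasis ℕ ℝ H} {μ : ℕ → ℝ} (hT : IsSelfAdjoint T)
    (hb : ∀ i, T (b i) = μ i • b i) (hμ : Antitone μ) {k : ℕ} (hk : k < Module.finrank ℝ V)
    (L : V →ₗ[ℝ] H) : ∃ y : V, ‖y‖ = 1 ∧ ⟪T (L y), L y⟫ ≤ μ k * ‖L y‖ ^ 2 := by
  let P : V →ₗ[ℝ] Fin k → ℝ := LinearMap.pi (fun i => (innerSL ℝ (b i)).toLinearMap) ∘ₗ L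
  obtain ⟨y, hyP, hy⟩ := Submodule.exists_mem_ne_zero_of_ne_bot
    (LinearMap.ker_ne_bot_of_finrank_lt (f := P) (by simpa using hk))
  refine ⟨‖y‖⁻¹ • y, norm_smul_inv_norm hy, inner_apply_self_le hT hb hμ fun i hi => ?_⟩
  have : ⟪b i, L y⟫ = 0 := congrFun (LinearMap.mem_ker.1 hyP) ⟨i, hi⟩
  simp [this, real_inner_smul_right]

theorem le_of_orthonormal_apply_eq_smul {b : HilbertBasis ℕ ℝ H} {μ : ℕ → ℝ} (hT : IsSelfAdjoint T)
    (hb : ∀ i, T (b i) = μ i • b i) (hμ : Antitone μ) {k : ℕ}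
    {v : Fin (k + 1) → H} (hv : Orthonormal ℝ v) {μ' : Fin (k + 1) → ℝ}
    (hTv : ∀ j, T (v j) = μ' j • v j) {c : ℝ} (hc : ∀ j, c ≤ μ' j) : c ≤ μ k := by
  obtain ⟨a, ha, hle⟩ := exists_norm_eq_one_inner_apply_le hT hb hμ (k := k) (by simp)
    (Fintype.linearCombination ℝ v)
  rw [Fintype.linearCombination_apply] at hle
  have hne := hv.sum_smul_ne_zero (a := a) (norm_ne_zero_iff.1 (ha ▸ one_ne_zero))
  exact le_of_mul_le_mul_right ((hv.mul_norm_sq_le_inner_apply hTv hc a).trans hle)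
    (by positivity)

end Eigenbasis

section AsymptoticIsometry

variable {E F : Type*} [NormedAddCommGroup E] [NormedSpace ℝ E]
  [NormedAddCommGroup F] [NormedSpace ℝ F] {U : ℕ → E →L[ℝ] F}

lemma tendsto_apply_of_tendsto_opNorm {D : ℕ → E →L[ℝ] F}
    (hD : Tendsto (fun n => ‖D n‖) atTop (𝓝 0)) {x : ℕ → E} {x₀ : E}
    (hx : Tendsto x atTop (𝓝 x₀)) : Tendsto (fun n => D n (x n)) atTop (𝓝 0) :=
  squeeze_zero_norm (fun n => (D n).le_opNorm (x n)) (by simpa using hD.mul hx.norm)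

variable [CompleteSpace E]

lemma exists_opNorm_le_of_tendsto_norm_apply
    (hU : ∀ g, Tendsto (fun n => ‖U n g‖) atTop (𝓝 ‖g‖)) : ∃ C, ∀ n, ‖U n‖ ≤ C :=
  banach_steinhaus fun g =>
    let ⟨C, hC⟩ := (hU g).bddAbove_range
    ⟨C, fun n => hC ⟨n, rfl⟩⟩

lemma tendsto_norm_apply_of_tendsto (hU : ∀ g, Tendsto (fun n => ‖U n g‖) atTop (𝓝 ‖g‖))
    {x : ℕ → E} {x₀ : E} (hx : Tendsto x atTop (𝓝 x₀)) :
    Tendsto (fun n => ‖U n (x n)‖) atTop (𝓝 ‖x₀‖) := by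
  obtain ⟨C, hC⟩ := exists_opNorm_le_of_tendsto_norm_apply hU
  refine (hU x₀).congr_dist (squeeze_zero (fun _ => dist_nonneg) (fun n => ?_)
    (by simpa using (tendsto_iff_norm_sub_tendsto_zero.1 hx).const_mul C))
  calc dist ‖U n x₀‖ ‖U n (x n)‖ ≤ ‖U n x₀ - U n (x n)‖ := abs_norm_sub_norm_le _ _
    _ = ‖U n (x n - x₀)‖ := by rw [map_sub, norm_sub_rev]
    _ ≤ C * ‖x n - x₀‖ := (U n).le_of_opNorm_le (hC n) _

end AsymptoticIsometry

section AsymptoticIsometryInner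

variable {E F : Type*} [NormedAddCommGroup E] [InnerProductSpace ℝ E]
  [NormedAddCommGroup F] [InnerProductSpace ℝ F] {U : ℕ → E →L[ℝ] F}

lemma tendsto_inner_of_tendsto_zero {w u : ℕ → F} (hw : Tendsto w atTop (𝓝 0)) {c : ℝ}
    (hu : Tendsto (fun n => ‖u n‖) atTop (𝓝 c)) :
    Tendsto (fun n => ⟪w n, u n⟫) atTop (𝓝 0) :=
  squeeze_zero_norm (fun n => norm_inner_le_norm _ _)
    (by simpa using (tendsto_zero_iff_norm_tendsto_zero.1 hw).mul hu)

variable [CompleteSpace E]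

lemma tendsto_inner_apply_of_tendsto (hU : ∀ g, Tendsto (fun n => ‖U n g‖) atTop (𝓝 ‖g‖))
    {x y : ℕ → E} {x₀ y₀ : E} (hx : Tendsto x atTop (𝓝 x₀)) (hy : Tendsto y atTop (𝓝 y₀)) :
    Tendsto (fun n => ⟪U n (x n), U n (y n)⟫) atTop (𝓝 ⟪x₀, y₀⟫) := by
  have hn : ∀ {z : ℕ → E} {z₀ : E}, Tendsto z atTop (𝓝 z₀) →
      Tendsto (fun n => ‖U n (z n)‖) atTop (𝓝 ‖z₀‖) := tendsto_norm_apply_of_tendsto hU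
  simp_rw [real_inner_eq_norm_add_mul_self_sub_norm_mul_self_sub_norm_mul_self_div_two, ← map_add]
  exact ((((hn (hx.add hy)).mul (hn (hx.add hy))).sub ((hn hx).mul (hn hx))).sub
    ((hn hy).mul (hn hy))).div_const 2

lemma tendsto_inner_apply_comp_apply (hU : ∀ g, Tendsto (fun n => ‖U n g‖) atTop (𝓝 ‖g‖))
    {T : ℕ → F →L[ℝ] F} {R : E →L[ℝ] E}
    (hTU : Tendsto (fun n => ‖(T n).comp (U n) - (U n).comp R‖) atTop (𝓝 0))
    {x : ℕ → E} {x₀ : E} (hx : Tendsto x atTop (𝓝 x₀)) :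
    Tendsto (fun n => ⟪T n (U n (x n)), U n (x n)⟫) atTop (𝓝 ⟪R x₀, x₀⟫) := by
  have hsplit : ∀ n, ⟪T n (U n (x n)), U n (x n)⟫ =
      ⟪((T n).comp (U n) - (U n).comp R) (x n), U n (x n)⟫ + ⟪U n (R (x n)), U n (x n)⟫ := by
    intro n
    simp [inner_sub_left]
  simp_rw [hsplit]
  simpa using (tendsto_inner_of_tendsto_zero (tendsto_apply_of_tendsto_opNorm hTU hx)
    (tendsto_norm_apply_of_tendsto hU hx)).add
    (tendsto_inner_apply_of_tendsto hU ((R.continuous.tendsto x₀).comp hx) hx)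

end AsymptoticIsometryInner

section SpectralConvergence

variable {H₁ H₂ : Type*} [NormedAddCommGroup H₁] [InnerProductSpace ℝ H₁]
  [NormedAddCommGroup H₂] [InnerProductSpace ℝ H₂]
  {T : ℕ → H₁ →L[ℝ] H₁} {R : H₂ →L[ℝ] H₂} {U : ℕ → H₂ →L[ℝ] H₁}

theorem eigenvalue_le_of_tendsto [CompleteSpace H₁] [CompleteSpace H₂]
    (hU : ∀ g, Tendsto (fun n => ‖U n g‖) atTop (𝓝 ‖g‖))
    (hTU : Tendsto (fun n => ‖(T n).comp (U n) - (U n).comp R‖) atTop (𝓝 0))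
    {b : ℕ → HilbertBasis ℕ ℝ H₁} {μ : ℕ → ℕ → ℝ} (hT : ∀ n, IsSelfAdjoint (T n))
    (hb : ∀ n i, T n (b n i) = μ n i • b n i) (hμ : ∀ n, Antitone (μ n))
    {e : ℕ → H₂} {ν : ℕ → ℝ} (he : Orthonormal ℝ e) (hRe : ∀ i, R (e i) = ν i • e i)
    (hν : Antitone ν) {k : ℕ} {m : ℝ} (hm : Tendsto (fun n => μ n k) atTop (𝓝 m)) :
    ν k ≤ m := by
  let V := Fintype.linearCombination ℝ fun j : Fin (k + 1) => e j
  choose a ha hle using fun n => exists_norm_eq_one_inner_apply_le (hT n) (hb n) (hμ n)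
    (k := k) (by simp) ((U n).toLinearMap ∘ₗ V)
  obtain ⟨a₀, ha₀, φ, hφ, ha⟩ := (isCompact_sphere (0 : Fin (k + 1) → ℝ) 1).tendsto_subseq
    (x := a) (by simpa using ha)
  have hx : Tendsto (fun n => V (a (φ n))) atTop (𝓝 (V a₀)) :=
    ((LinearMap.continuous_of_finiteDimensional V).tendsto a₀).comp ha
  have hUφ g : Tendsto (fun n => ‖U (φ n) g‖) atTop (𝓝 ‖g‖) := (hU g).comp hφ.tendsto_atTop
  have hupper : ⟪R (V a₀), V a₀⟫ ≤ m * ‖V a₀‖ ^ 2 :=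
    le_of_tendsto_of_tendsto' (tendsto_inner_apply_comp_apply hUφ (hTU.comp hφ.tendsto_atTop) hx)
      ((hm.comp hφ.tendsto_atTop).mul ((tendsto_norm_apply_of_tendsto hUφ hx).pow 2))
      fun n => hle (φ n)
  have horth : Orthonormal ℝ fun j : Fin (k + 1) => e j := he.comp _ Fin.val_injective
  have hlower : ν k * ‖V a₀‖ ^ 2 ≤ ⟪R (V a₀), V a₀⟫ := by
    simpa [V, Fintype.linearCombination_apply] using
      horth.mul_norm_sq_le_inner_apply (fun j => hRe j) (fun j => hν (Fin.is_le j)) a₀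
  have hne : V a₀ ≠ 0 := by
    simpa [V, Fintype.linearCombination_apply] using
      horth.sum_smul_ne_zero (a := a₀) (by rintro rfl; simp at ha₀)
  exact le_of_mul_le_mul_right (hlower.trans hupper) (by positivity)

lemma tendsto_apply_inv_smul_sub {v : ℕ → H₁} (hv : ∀ n, ‖v n‖ = 1) {μ : ℕ → ℝ}
    (hTv : ∀ n, T n (v n) = μ n • v n) {m : ℝ} (hm : Tendsto μ atTop (𝓝 m)) (hm₀ : m ≠ 0)
    {g : H₂} (hg : Tendsto (fun n => ‖T n (v n) - U n g‖) atTop (𝓝 0)) :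
    Tendsto (fun n => U n (m⁻¹ • g) - v n) atTop (𝓝 0) := by
  have hsplit : ∀ n, U n (m⁻¹ • g) - v n =
      m⁻¹ • (U n g - T n (v n)) + (m⁻¹ * (μ n - m)) • v n := by
    intro n
    rw [hTv, map_smul, mul_sub, sub_smul, inv_mul_cancel₀ hm₀, one_smul, smul_sub, mul_smul]
    abel
  simp_rw [hsplit]
  have hsmall : Tendsto (fun n => m⁻¹ * (μ n - m)) atTop (𝓝 0) := by
    simpa using (hm.sub_const m).const_mul m⁻¹
  have hclose : Tendsto (fun n => U n g - T n (v n)) atTop (𝓝 0) :=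
    tendsto_zero_iff_norm_tendsto_zero.2 (by simpa [norm_sub_rev] using hg)
  simpa using (hclose.const_smul m⁻¹).add
    (hsmall.zero_smul_isBoundedUnder_le (isBoundedUnder_of ⟨1, fun n => (hv n).le⟩))

lemma apply_eq_smul_of_tendsto_apply_sub [CompleteSpace H₂]
    (hU : ∀ g, Tendsto (fun n => ‖U n g‖) atTop (𝓝 ‖g‖))
    (hTU : Tendsto (fun n => ‖(T n).comp (U n) - (U n).comp R‖) atTop (𝓝 0))
    {C : ℝ} (hC : ∀ n, ‖T n‖ ≤ C) {v : ℕ → H₁} (hv : ∀ n, ‖v n‖ = 1) {μ : ℕ → ℝ}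
    (hTv : ∀ n, T n (v n) = μ n • v n) {m : ℝ} (hm : Tendsto μ atTop (𝓝 m)) {h : H₂}
    (hh : Tendsto (fun n => U n h - v n) atTop (𝓝 0)) : R h = m • h := by
  have hsplit : ∀ n, U n (R h - m • h) = -((T n).comp (U n) - (U n).comp R) h +
      T n (U n h - v n) + (μ n - m) • v n - m • (U n h - v n) := by
    intro n
    simp only [FunLike.coe_sub, Pi.sub_apply, ContinuousLinearMap.coe_comp,
      Function.comp_apply, map_sub, map_smul, hTv, sub_smul, smul_sub]
    abel
  have hTh : Tendsto (fun n => T n (U n h - v n)) atTop (𝓝 0) :=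
    squeeze_zero_norm (fun n => (T n).le_of_opNorm_le (hC n) _)
      (by simpa using (tendsto_zero_iff_norm_tendsto_zero.1 hh).const_mul C)
  have hlim : Tendsto (fun n => U n (R h - m • h)) atTop (𝓝 0) := by
    have := ((((tendsto_apply_of_tendsto_opNorm hTU (tendsto_const_nhds (x := h))).neg).add
      hTh).add ((by simpa using hm.sub_const m : Tendsto (fun n => μ n - m) atTop (𝓝 0))
        |>.zero_smul_isBoundedUnder_le (isBoundedUnder_of ⟨1, fun n => (hv n).le⟩))).sub
      (hh.const_smul m)
    simp only [neg_zero, add_zero, smul_zero, sub_zero] at this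
    exact this.congr fun n => (hsplit n).symm
  have hnorm : ‖R h - m • h‖ = 0 :=
    tendsto_nhds_unique (hU _) (by simpa using hlim.norm)
  exact sub_eq_zero.1 (norm_eq_zero.1 hnorm)

lemma Orthonormal.of_tendsto_apply_sub [CompleteSpace H₂]
    (hU : ∀ g, Tendsto (fun n => ‖U n g‖) atTop (𝓝 ‖g‖))
    {ι : Type*} {v : ℕ → ι → H₁} (hv : ∀ n, Orthonormal ℝ (v n)) {h : ι → H₂}
    (hh : ∀ i, Tendsto (fun n => U n (h i) - v n i) atTop (𝓝 0)) : Orthonormal ℝ h := by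
  classical
  rw [orthonormal_iff_ite]
  intro i j
  have hsplit : ∀ n, ⟪U n (h i), U n (h j)⟫ = ⟪U n (h i) - v n i, U n (h j)⟫ +
      ⟪U n (h j) - v n j, v n i⟫ + (if i = j then 1 else 0) := by
    intro n
    rw [← orthonormal_iff_ite.1 (hv n) i j]
    simp only [inner_sub_left, inner_sub_right, real_inner_comm (v n i)]
    ring
  have hlim : Tendsto (fun n => ⟪U n (h i), U n (h j)⟫) atTop (𝓝 (if i = j then 1 else 0)) := by
    simp_rw [hsplit]
    simpa using ((tendsto_inner_of_tendsto_zero (hh i) (hU (h j))).add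
      (tendsto_inner_of_tendsto_zero (hh j) (c := 1) (by simp [(hv _).1 i]))).add_const _
  exact tendsto_nhds_unique
    (tendsto_inner_apply_of_tendsto hU tendsto_const_nhds tendsto_const_nhds) hlim

theorem le_eigenvalue_of_tendsto_apply_sub [CompleteSpace H₁] [CompleteSpace H₂]
    (hU : ∀ g, Tendsto (fun n => ‖U n g‖) atTop (𝓝 ‖g‖))
    (hTU : Tendsto (fun n => ‖(T n).comp (U n) - (U n).comp R‖) atTop (𝓝 0))
    {b : ℕ → HilbertBasis ℕ ℝ H₁} {μ : ℕ → ℕ → ℝ} (hT : ∀ n, IsSelfAdjoint (T n))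
    (hb : ∀ n i, T n (b n i) = μ n i • b n i) (hμ : ∀ n, Antitone (μ n))
    (hμ₀ : ∀ n i, 0 ≤ μ n i) {e : HilbertBasis ℕ ℝ H₂} {ν : ℕ → ℝ} (hR : IsSelfAdjoint R)
    (hRe : ∀ i, R (e i) = ν i • e i) (hν : Antitone ν) {k : ℕ} {g : Fin (k + 1) → H₂}
    {m : Fin (k + 1) → ℝ}
    (hg : ∀ j : Fin (k + 1), Tendsto (fun n => ‖T n (b n j) - U n (g j)‖) atTop (𝓝 0))
    (hm : ∀ j : Fin (k + 1), Tendsto (fun n => μ n j) atTop (𝓝 (m j)))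
    (hm₀ : 0 < m (Fin.last k)) :
    m (Fin.last k) ≤ ν k := by
  have hm_ge j : m (Fin.last k) ≤ m j :=
    le_of_tendsto_of_tendsto' (hm _) (hm j) fun n => hμ n (Fin.is_le j)
  obtain ⟨C, hC⟩ := (hm 0).bddAbove_range
  have hTC n : ‖T n‖ ≤ C :=
    (opNorm_le_of_abs_le (hT n) (hb n) (hμ₀ n 0) fun i => (abs_of_nonneg (hμ₀ n i)).trans_le
      (hμ n (Nat.zero_le i))).trans (hC ⟨n, rfl⟩)
  have hnear j : Tendsto (fun n => U n ((m j)⁻¹ • g j) - b n j) atTop (𝓝 0) :=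
    tendsto_apply_inv_smul_sub (fun n => (b n).orthonormal.1 j) (fun n => hb n j) (hm j)
      (hm₀.trans_le (hm_ge j)).ne' (hg j)
  refine le_of_orthonormal_apply_eq_smul hR hRe hν
    (Orthonormal.of_tendsto_apply_sub hU (fun n => (b n).orthonormal.comp _ Fin.val_injective)
      hnear) (fun j => ?_) hm_ge
  exact apply_eq_smul_of_tendsto_apply_sub hU hTU hTC (fun n => (b n).orthonormal.1 j)
    (fun n => hb n j) (hm j) (hnear j)

end SpectralConvergence

theorem exists_strictMono_forall_lt_of_subseq {α : Type*} {C : (ℕ → α) → Prop}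
    {Q : ℕ → (ℕ → α) → Prop} (hC : ∀ x φ, StrictMono φ → C x → C (x ∘ φ))
    (hQ : ∀ j x φ, StrictMono φ → Q j x → Q j (x ∘ φ))
    (hext : ∀ j x, C x → ∃ φ, StrictMono φ ∧ Q j (x ∘ φ)) (k : ℕ) {x : ℕ → α} (hx : C x) :
    ∃ φ, StrictMono φ ∧ ∀ j < k, Q j (x ∘ φ) := by
  induction k with
  | zero => exact ⟨id, strictMono_id, fun j hj => absurd hj j.not_lt_zero⟩
  | succ k ih =>
    obtain ⟨φ, hφ, hQφ⟩ := ih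
    obtain ⟨ψ, hψ, hQψ⟩ := hext k (x ∘ φ) (hC x φ hφ hx)
    refine ⟨φ ∘ ψ, hφ.comp hψ, fun j hj => ?_⟩
    rcases Nat.lt_succ_iff_lt_or_eq.1 hj with hj | rfl
    · exact hQ j _ ψ hψ (hQφ j hj)
    · exact hQψ

section DiscreteCompactness

variable {H₁ H₂ : Type*} [NormedAddCommGroup H₁] [InnerProductSpace ℝ H₁]
  [NormedAddCommGroup H₂] [InnerProductSpace ℝ H₂]
  {Rε : ℝ → H₁ →L[ℝ] H₁} {Uε : ℝ → H₂ →L[ℝ] H₁} {νε : ℝ → ℕ → ℝ} {eε : ℝ → ℕ → H₁}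

theorem exists_subseq_eigenvector_limit
    (heε : ∀ ε : ℝ, 0 < ε → ∀ j, ‖eε ε j‖ = 1 ∧ Rε ε (eε ε j) = νε ε j • eε ε j)
    (hU : ∀ g : H₂, Tendsto (fun ε : ℝ => ‖Uε ε g‖) (𝓝[>] 0) (𝓝 ‖g‖))
    (h4 : ∀ εn : ℕ → ℝ, (∀ n, 0 < εn n) → Tendsto εn atTop (𝓝 0) →
      ∀ f : ℕ → H₁, (∃ M : ℝ, ∀ n, ‖f n‖ ≤ M) →
      ∃ φ : ℕ → ℕ, StrictMono φ ∧ ∃ g : H₂,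
        Tendsto (fun n => ‖Rε (εn (φ n)) (f (φ n)) - Uε (εn (φ n)) g‖) atTop (𝓝 0))
    {ε : ℕ → ℝ} (hε : (∀ n, 0 < ε n) ∧ Tendsto ε atTop (𝓝 0)) (j : ℕ) :
    ∃ φ : ℕ → ℕ, StrictMono φ ∧ ∃ g : H₂, ∃ m : ℝ,
      Tendsto (fun n => ‖Rε (ε (φ n)) (eε (ε (φ n)) j) - Uε (ε (φ n)) g‖) atTop (𝓝 0) ∧
      Tendsto (fun n => νε (ε (φ n)) j) atTop (𝓝 m) := by
  obtain ⟨φ, hφ, g, hg⟩ := h4 ε hε.1 hε.2 (fun n => eε (ε n) j)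
    ⟨1, fun n => (heε _ (hε.1 n) j).1.le⟩
  have hεφ : Tendsto (fun n => ε (φ n)) atTop (𝓝[>] 0) :=
    tendsto_nhdsWithin_iff.2 ⟨hε.2.comp hφ.tendsto_atTop, .of_forall fun n => hε.1 _⟩
  obtain ⟨M, hM⟩ := (hg.add ((hU g).comp hεφ)).bddAbove_range
  have hbdd n : νε (ε (φ n)) j ∈ Metric.closedBall 0 M := by
    obtain ⟨hunit, heig⟩ := heε _ (hε.1 (φ n)) j
    have hnorm : ‖νε (ε (φ n)) j‖ = ‖Rε (ε (φ n)) (eε (ε (φ n)) j)‖ := by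
      rw [heig, norm_smul, hunit, mul_one]
    rw [mem_closedBall_zero_iff, hnorm]
    exact (norm_le_norm_sub_add _ (Uε (ε (φ n)) g)).trans (hM ⟨n, rfl⟩)
  obtain ⟨m, -, ψ, hψ, hm⟩ := tendsto_subseq_of_bounded Metric.isBounded_closedBall hbdd
  exact ⟨φ ∘ ψ, hφ.comp hψ, g, m, hg.comp hψ.tendsto_atTop, hm⟩

theorem exists_subseq_eigenvector_limits
    (heε : ∀ ε : ℝ, 0 < ε → ∀ j, ‖eε ε j‖ = 1 ∧ Rε ε (eε ε j) = νε ε j • eε ε j)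
    (hU : ∀ g : H₂, Tendsto (fun ε : ℝ => ‖Uε ε g‖) (𝓝[>] 0) (𝓝 ‖g‖))
    (h4 : ∀ εn : ℕ → ℝ, (∀ n, 0 < εn n) → Tendsto εn atTop (𝓝 0) →
      ∀ f : ℕ → H₁, (∃ M : ℝ, ∀ n, ‖f n‖ ≤ M) →
      ∃ φ : ℕ → ℕ, StrictMono φ ∧ ∃ g : H₂,
        Tendsto (fun n => ‖Rε (εn (φ n)) (f (φ n)) - Uε (εn (φ n)) g‖) atTop (𝓝 0))
    {ε : ℕ → ℝ} (hε : (∀ n, 0 < ε n) ∧ Tendsto ε atTop (𝓝 0)) (k : ℕ) :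
    ∃ φ : ℕ → ℕ, StrictMono φ ∧ ∃ g : Fin (k + 1) → H₂, ∃ m : Fin (k + 1) → ℝ,
      ∀ j : Fin (k + 1),
      Tendsto (fun n => ‖Rε (ε (φ n)) (eε (ε (φ n)) j) - Uε (ε (φ n)) (g j)‖) atTop (𝓝 0) ∧
      Tendsto (fun n => νε (ε (φ n)) j) atTop (𝓝 (m j)) := by
  obtain ⟨φ, hφ, hlim⟩ := exists_strictMono_forall_lt_of_subseq
    (C := fun x => (∀ n, 0 < x n) ∧ Tendsto x atTop (𝓝 0))
    (Q := fun j x => ∃ g m,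
      Tendsto (fun n => ‖Rε (x n) (eε (x n) j) - Uε (x n) g‖) atTop (𝓝 0) ∧
      Tendsto (fun n => νε (x n) j) atTop (𝓝 m))
    (fun x φ hφ hx => ⟨fun n => hx.1 _, hx.2.comp hφ.tendsto_atTop⟩)
    (fun j x φ hφ ⟨g, m, hg, hm⟩ => ⟨g, m, hg.comp hφ.tendsto_atTop, hm.comp hφ.tendsto_atTop⟩)
    (fun j x hx => exists_subseq_eigenvector_limit heε hU h4 hx j) (k + 1) hε
  choose g m hg hm using fun j : Fin (k + 1) => hlim j j.2
  exact ⟨φ, hφ, g, m, fun j => ⟨hg j, hm j⟩⟩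

end DiscreteCompactness

theorem stmt19_general {H₁ H₂ : Type*}
    [NormedAddCommGroup H₁] [InnerProductSpace ℝ H₁] [CompleteSpace H₁]
    [NormedAddCommGroup H₂] [InnerProductSpace ℝ H₂] [CompleteSpace H₂]
    (Rε : ℝ → (H₁ →L[ℝ] H₁)) (R : H₂ →L[ℝ] H₂)
    (hRεsa : ∀ ε : ℝ, 0 < ε → IsSelfAdjoint (Rε ε))
    (hRsa : IsSelfAdjoint R)
    (νε : ℝ → ℕ → ℝ) (ν : ℕ → ℝ) (eε : ℝ → ℕ → H₁) (e : ℕ → H₂)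
    (hνε_pos : ∀ ε : ℝ, 0 < ε → ∀ k, 0 < νε ε k)
    (hνε_anti : ∀ ε : ℝ, 0 < ε → Antitone (νε ε))
    (heε : ∀ ε : ℝ, 0 < ε → Orthonormal ℝ (eε ε) ∧
      (∀ k, Rε ε (eε ε k) = νε ε k • eε ε k) ∧
      (Submodule.span ℝ (Set.range (eε ε))).topologicalClosure = ⊤)
    (hν_pos : ∀ k, 0 < ν k) (hν_anti : Antitone ν)
    (he : Orthonormal ℝ e ∧ (∀ k, R (e k) = ν k • e k) ∧
      (Submodule.span ℝ (Set.range e)).topologicalClosure = ⊤)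
    (Uε : ℝ → (H₂ →L[ℝ] H₁))
    (hU : ∀ g : H₂, Tendsto (fun ε : ℝ => ‖Uε ε g‖) (𝓝[>] 0) (𝓝 ‖g‖))
    (hnorm : Tendsto (fun ε : ℝ => ‖(Rε ε).comp (Uε ε) - (Uε ε).comp R‖) (𝓝[>] 0) (𝓝 0))
    (h4 : ∀ εn : ℕ → ℝ, (∀ n, 0 < εn n) → Tendsto εn atTop (𝓝 0) →
      ∀ f : ℕ → H₁, (∃ M : ℝ, ∀ n, ‖f n‖ ≤ M) →
      ∃ φ : ℕ → ℕ, StrictMono φ ∧ ∃ g : H₂,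
        Tendsto (fun n => ‖Rε (εn (φ n)) (f (φ n)) - Uε (εn (φ n)) g‖) atTop (𝓝 0)) :
    ∀ k : ℕ, Tendsto (fun ε : ℝ => νε ε k) (𝓝[>] 0) (𝓝 (ν k)) := by
  intro k
  refine tendsto_of_subseq_tendsto fun εs hεs => ?_
  obtain ⟨hεs0, hεs_pos⟩ := tendsto_nhdsWithin_iff.1 hεs
  obtain ⟨N, hN⟩ := eventually_atTop.1 hεs_pos
  obtain ⟨φ, hφ, g, m, hgm⟩ := exists_subseq_eigenvector_limits
    (fun ε hε j => ⟨(heε ε hε).1.1 j, (heε ε hε).2.1 j⟩) hU h4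
    ⟨fun n => hN _ (Nat.le_add_left N n), (tendsto_add_atTop_iff_nat N).2 hεs0⟩ k
  set ε : ℕ → ℝ := fun n => εs (φ n + N)
  have hε n : 0 < ε n := hN _ (Nat.le_add_left N _)
  have hε0 : Tendsto ε atTop (𝓝[>] 0) :=
    tendsto_nhdsWithin_iff.2 ⟨((tendsto_add_atTop_iff_nat N).2 hεs0).comp hφ.tendsto_atTop,
      .of_forall hε⟩
  let b n : HilbertBasis ℕ ℝ H₁ := HilbertBasis.mk (heε _ (hε n)).1 (heε _ (hε n)).2.2.ge
  have hb n i : Rε (ε n) (b n i) = νε (ε n) i • b n i := by simpa [b] using (heε _ (hε n)).2.1 i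
  have hlow : ν k ≤ m (Fin.last k) :=
    eigenvalue_le_of_tendsto (fun g => (hU g).comp hε0) (hnorm.comp hε0)
      (fun n => hRεsa _ (hε n)) hb (fun n => hνε_anti _ (hε n)) he.1 he.2.1 hν_anti
      (hgm (Fin.last k)).2
  have hup : m (Fin.last k) ≤ ν k :=
    le_eigenvalue_of_tendsto_apply_sub (fun g => (hU g).comp hε0) (hnorm.comp hε0)
      (fun n => hRεsa _ (hε n)) hb (fun n => hνε_anti _ (hε n))
      (fun n i => (hνε_pos _ (hε n) i).le)
      (e := HilbertBasis.mk he.1 he.2.2.ge) hRsa (by simpa using he.2.1) hν_anti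
      (fun j => by simpa [b] using (hgm j).1) (fun j => (hgm j).2) ((hν_pos k).trans_le hlow)
  exact ⟨fun n => φ n + N, by simpa [le_antisymm hup hlow] using (hgm (Fin.last k)).2⟩

/-- Spectral convergence: if the compact, self-adjoint, nonnegative operators `Rε` (with
eigenvalue enumerations `νε ε` realized by orthonormal eigenbases `eε ε`) converge to `R`
(eigenvalues `ν`, eigenbasis `e`) in the sense `‖Rε Uε − Uε R‖ → 0` with asymptotically isometric
identification operators `Uε`, and the discrete compactness hypothesis (H4) holds, then every
eigenvalue converges: `νε ε k → ν k` as `ε → 0⁺`. -/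
theorem stmt19 {H₁ H₂ : Type*}
    [NormedAddCommGroup H₁] [InnerProductSpace ℝ H₁] [CompleteSpace H₁]
    [NormedAddCommGroup H₂] [InnerProductSpace ℝ H₂] [CompleteSpace H₂]
    (Rε : ℝ → (H₁ →L[ℝ] H₁)) (R : H₂ →L[ℝ] H₂)
    (hRεc : ∀ ε : ℝ, 0 < ε → IsCompactOperator (Rε ε))
    (hRεsa : ∀ ε : ℝ, 0 < ε → IsSelfAdjoint (Rε ε))
    (hRεpos : ∀ ε : ℝ, 0 < ε → ∀ x : H₁, 0 ≤ ⟪Rε ε x, x⟫)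
    (hRc : IsCompactOperator R) (hRsa : IsSelfAdjoint R) (hRpos : ∀ x : H₂, 0 ≤ ⟪R x, x⟫)
    (νε : ℝ → ℕ → ℝ) (ν : ℕ → ℝ) (eε : ℝ → ℕ → H₁) (e : ℕ → H₂)
    (hνε_pos : ∀ ε : ℝ, 0 < ε → ∀ k, 0 < νε ε k)
    (hνε_anti : ∀ ε : ℝ, 0 < ε → Antitone (νε ε))
    (heε : ∀ ε : ℝ, 0 < ε → Orthonormal ℝ (eε ε) ∧
      (∀ k, Rε ε (eε ε k) = νε ε k • eε ε k) ∧
      (Submodule.span ℝ (Set.range (eε ε))).topologicalClosure = ⊤)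
    (hν_pos : ∀ k, 0 < ν k) (hν_anti : Antitone ν)
    (he : Orthonormal ℝ e ∧ (∀ k, R (e k) = ν k • e k) ∧
      (Submodule.span ℝ (Set.range e)).topologicalClosure = ⊤)
    (Uε : ℝ → (H₂ →L[ℝ] H₁))
    (hU : ∀ g : H₂, Tendsto (fun ε : ℝ => ‖Uε ε g‖) (𝓝[>] 0) (𝓝 ‖g‖))
    (hnorm : Tendsto (fun ε : ℝ => ‖(Rε ε).comp (Uε ε) - (Uε ε).comp R‖) (𝓝[>] 0) (𝓝 0))
    (h4 : ∀ εn : ℕ → ℝ, (∀ n, 0 < εn n) → Tendsto εn atTop (𝓝 0) →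
      ∀ f : ℕ → H₁, (∃ M : ℝ, ∀ n, ‖f n‖ ≤ M) →
      ∃ φ : ℕ → ℕ, StrictMono φ ∧ ∃ g : H₂,
        Tendsto (fun n => ‖Rε (εn (φ n)) (f (φ n)) - Uε (εn (φ n)) g‖) atTop (𝓝 0)) :
    ∀ k : ℕ, Tendsto (fun ε : ℝ => νε ε k) (𝓝[>] 0) (𝓝 (ν k)) :=
  stmt19_general Rε R hRεsa hRsa νε ν eε e hνε_pos hνε_anti heε hν_pos hν_anti he Uε hU hnorm h4
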